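/- Let α ∈ ℝ \ {0}, m > 0, and r > 0. Then there is a constant C = C(m) such that |∫₀^∞ e^{iαt} e^{-r²/t} t^{-m} dt| ≤ C · min{ 1/(|α| r^{2m}), 1/(|α|^{1/(m+1)} r^{2m²/(m+1)}) }. -/

import Mathlib

/-!
Integrating by parts against `e^{iαt} = d/dt (e^{iαt} / (iα))` bounds `|∫_a^b e^{iαt} g|` by
`(|g a| + |g b| + ∫_a^b |g'|) / |α|`, which is `2 g(c) / |α|` when `g ≥ 0` increases up to `c`
and decreases after it. The weight `g t = e^{-r²/t} t^{-m}` is of this kind, with peak `r² / m`,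
and is bounded both by `M = m^m e^{-m} r^{-2m}` and by `t^{-m}`. Splitting `(0, T]` at `ε` and
bounding the piece `(0, ε]` trivially gives `M ε + 2 min(M, ε^{-m}) / |α|`. Letting `ε → 0` gives
the first bound, and choosing `ε` so that `M ε = ε^{-m} / |α|` gives the second.
-/

open MeasureTheory Set Filter

open Topology

section Oscillatory

variable {g g' : ℝ → ℝ} {a b c α : ℝ}

theorem norm_integral_exp_mul_le (hα : α ≠ 0) (hab : a ≤ b)
    (hg : ∀ t ∈ Icc a b, HasDerivAt g (g' t) t) (hg' : IntervalIntegrable g' volume a b) :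
    ‖∫ t in a..b, Complex.exp (Complex.I * ((α * t : ℝ) : ℂ)) * (g t : ℂ)‖ ≤
      (|g a| + |g b| + ∫ t in a..b, |g' t|) / |α| := by
  set v : ℝ → ℂ := fun t => Complex.exp (Complex.I * ((α * t : ℝ) : ℂ)) / (Complex.I * α)
  have hIα : Complex.I * α ≠ 0 := mul_ne_zero Complex.I_ne_zero (Complex.ofReal_ne_zero.mpr hα)
  have hv : ∀ t, HasDerivAt v (Complex.exp (Complex.I * ((α * t : ℝ) : ℂ))) t := fun t => by
    have := ((((hasDerivAt_id t).const_mul α).ofReal_comp).const_mul Complex.I).cexp.div_const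
      (Complex.I * α)
    simpa only [id, mul_one, mul_div_cancel_right₀ _ hIα] using this
  have hnorm_v : ∀ t, ‖v t‖ = 1 / |α| := fun t => by
    rw [norm_div, Complex.norm_exp_I_mul_ofReal]
    simp
  have hibp := intervalIntegral.integral_mul_deriv_eq_deriv_mul
    (fun t ht => (hg t (uIcc_of_le hab ▸ ht)).ofReal_comp) (fun t _ => hv t)
    ⟨hg'.1.ofReal, hg'.2.ofReal⟩ (Continuous.intervalIntegrable (by fun_prop) a b)
  have hrem : ‖∫ t in a..b, (g' t : ℂ) * v t‖ ≤ ∫ t in a..b, |g' t| / |α| :=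
    intervalIntegral.norm_integral_le_of_norm_le hab
      (Eventually.of_forall fun t _ => by simp [hnorm_v, div_eq_mul_inv])
      (hg'.abs.div_const _)
  simp_rw [mul_comm (Complex.exp _), hibp]
  calc _ ≤ ‖(g b : ℂ) * v b‖ + ‖(g a : ℂ) * v a‖ + ‖∫ t in a..b, (g' t : ℂ) * v t‖ :=
        norm_sub_le_of_le (norm_sub_le _ _) le_rfl
    _ ≤ |g b| / |α| + |g a| / |α| + (∫ t in a..b, |g' t|) / |α| := by
        rw [← intervalIntegral.integral_div]
        gcongr <;> simp [hnorm_v, div_eq_mul_inv]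
    _ = _ := by ring

theorem integral_abs_deriv_eq_of_unimodal (hac : a ≤ c) (hcb : c ≤ b)
    (hg : ∀ t ∈ Icc a b, HasDerivAt g (g' t) t) (hg' : IntervalIntegrable g' volume a b)
    (hup : ∀ t ∈ Ioo a c, 0 ≤ g' t) (hdown : ∀ t ∈ Ioo c b, g' t ≤ 0) :
    ∫ t in a..b, |g' t| = (g c - g a) + (g c - g b) := by
  have hcont : ContinuousOn g (Icc a b) := fun t ht => (hg t ht).continuousAt.continuousWithinAt
  have hsub : ∀ {x y}, x ∈ Icc a b → y ∈ Icc a b → uIcc x y ⊆ uIcc a b := fun hx hy =>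
    uIcc_subset_uIcc (Icc_subset_uIcc hx) (Icc_subset_uIcc hy)
  have ha : a ∈ Icc a b := ⟨le_rfl, hac.trans hcb⟩
  have hb : b ∈ Icc a b := ⟨hac.trans hcb, le_rfl⟩
  have hc : c ∈ Icc a b := ⟨hac, hcb⟩
  have hrise : ∫ t in a..c, |g' t| = g c - g a :=
    intervalIntegral.integral_eq_sub_of_hasDerivAt_of_le hac
      (hcont.mono (Icc_subset_Icc_right hcb))
      (fun t ht => by rw [abs_of_nonneg (hup t ht)]; exact hg t ⟨ht.1.le, ht.2.le.trans hcb⟩)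
      (hg'.abs.mono_set (hsub ha hc))
  have hfall : ∫ t in c..b, |g' t| = -g b - -g c :=
    intervalIntegral.integral_eq_sub_of_hasDerivAt_of_le hcb
      (hcont.neg.mono (Icc_subset_Icc_left hac))
      (fun t ht => by
        rw [abs_of_nonpos (hdown t ht)]
        exact (hg t ⟨hac.trans ht.1.le, ht.2.le⟩).neg)
      (hg'.abs.mono_set (hsub hc hb))
  rw [← intervalIntegral.integral_add_adjacent_intervals (hg'.abs.mono_set (hsub ha hc))
    (hg'.abs.mono_set (hsub hc hb)), hrise, hfall]
  ring

theorem norm_integral_exp_mul_le_of_unimodal (hα : α ≠ 0) (hac : a ≤ c) (hcb : c ≤ b)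
    (hg : ∀ t ∈ Icc a b, HasDerivAt g (g' t) t) (hg' : IntervalIntegrable g' volume a b)
    (hup : ∀ t ∈ Ioo a c, 0 ≤ g' t) (hdown : ∀ t ∈ Ioo c b, g' t ≤ 0)
    (hga : 0 ≤ g a) (hgb : 0 ≤ g b) :
    ‖∫ t in a..b, Complex.exp (Complex.I * ((α * t : ℝ) : ℂ)) * (g t : ℂ)‖ ≤ 2 * g c / |α| := by
  have := norm_integral_exp_mul_le hα (hac.trans hcb) hg hg'
  rwa [integral_abs_deriv_eq_of_unimodal hac hcb hg hg' hup hdown, abs_of_nonneg hga,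
    abs_of_nonneg hgb, show g a + g b + (g c - g a + (g c - g b)) = 2 * g c by ring] at this

end Oscillatory

section Weight

variable {m r t : ℝ}

noncomputable def expNegDivRpow (m r t : ℝ) : ℝ := Real.exp (-(r ^ 2 / t)) / t ^ m

theorem expNegDivRpow_nonneg (ht : 0 ≤ t) : 0 ≤ expNegDivRpow m r t :=
  div_nonneg (Real.exp_nonneg _) (Real.rpow_nonneg ht _)

theorem expNegDivRpow_le_inv_rpow (ht : 0 ≤ t) : expNegDivRpow m r t ≤ (t ^ m)⁻¹ := by
  rw [expNegDivRpow, div_eq_mul_inv]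
  refine mul_le_of_le_one_left (inv_nonneg.mpr (Real.rpow_nonneg ht _)) ?_
  exact Real.exp_le_one_iff.mpr (neg_nonpos.mpr (by positivity))

theorem exp_neg_mul_rpow_le (hm : 0 < m) {x : ℝ} (hx : 0 < x) :
    Real.exp (-x) * x ^ m ≤ m ^ m * Real.exp (-m) := by
  rw [Real.rpow_def_of_pos hx, Real.rpow_def_of_pos hm, ← Real.exp_add, ← Real.exp_add,
    Real.exp_le_exp]
  have hlog : Real.log (x / m) ≤ x / m - 1 := Real.log_le_sub_one_of_pos (div_pos hx hm)
  rw [Real.log_div hx.ne' hm.ne'] at hlog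
  have hxm : m * (x / m) = x := by field_simp
  nlinarith [mul_le_mul_of_nonneg_left hlog hm.le]

theorem expNegDivRpow_le (hm : 0 < m) (hr : 0 < r) (ht : 0 < t) :
    expNegDivRpow m r t ≤ m ^ m * Real.exp (-m) / r ^ (2 * m) := by
  have hr2 : (0 : ℝ) < r ^ 2 := by positivity
  have hrw : expNegDivRpow m r t = Real.exp (-(r ^ 2 / t)) * (r ^ 2 / t) ^ m / r ^ (2 * m) := by
    rw [expNegDivRpow, Real.div_rpow hr2.le ht.le, Real.rpow_mul hr.le, Real.rpow_two]
    field_simp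
  rw [hrw]
  exact div_le_div_of_nonneg_right (exp_neg_mul_rpow_le hm (div_pos hr2 ht)) (by positivity)

theorem hasDerivAt_expNegDivRpow (ht : 0 < t) :
    HasDerivAt (expNegDivRpow m r)
      (Real.exp (-(r ^ 2 / t)) * (r ^ 2 - m * t) / t ^ (m + 2)) t := by
  have hquot : HasDerivAt (fun t : ℝ => -(r ^ 2 / t)) (r ^ 2 / t ^ 2) t := by
    simpa [div_eq_mul_inv] using ((hasDerivAt_inv ht.ne').const_mul (r ^ 2)).fun_neg
  refine (hquot.exp.div (Real.hasDerivAt_rpow_const (p := m) (Or.inl ht.ne'))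
    (Real.rpow_pos_of_pos ht m).ne').congr_deriv ?_
  rw [Real.rpow_add ht, Real.rpow_sub_one ht.ne', Real.rpow_two]
  field_simp

end Weight

section Estimate

variable {m r α a b : ℝ}

theorem norm_integral_exp_mul_expNegDivRpow_le (hm : 0 < m) (hr : 0 < r) (hα : α ≠ 0)
    (ha : 0 < a) (hab : a ≤ b) :
    ‖∫ t in a..b, Complex.exp (Complex.I * ((α * t : ℝ) : ℂ)) * (expNegDivRpow m r t : ℂ)‖ ≤
      2 * min (m ^ m * Real.exp (-m) / r ^ (2 * m)) (a ^ m)⁻¹ / |α| := by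
  set c := max a (min b (r ^ 2 / m))
  have hac : a ≤ c := le_max_left _ _
  have hderiv_cont : ContinuousOn
      (fun t => Real.exp (-(r ^ 2 / t)) * (r ^ 2 - m * t) / t ^ (m + 2)) (Icc a b) := by
    have hpos : ∀ t ∈ Icc a b, 0 < t := fun t ht => ha.trans_le ht.1
    refine ContinuousOn.div (by fun_prop (disch := exact fun t ht => (hpos t ht).ne'))
      (fun t ht => (Real.continuousAt_rpow_const _ _ (Or.inl (hpos t ht).ne')).continuousWithinAt)
      fun t ht => (Real.rpow_pos_of_pos (hpos t ht) _).ne'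
  refine (norm_integral_exp_mul_le_of_unimodal hα hac (max_le hab (min_le_left _ _))
    (fun t ht => hasDerivAt_expNegDivRpow (ha.trans_le ht.1))
    (hderiv_cont.intervalIntegrable_of_Icc hab) ?_ ?_
    (expNegDivRpow_nonneg ha.le) (expNegDivRpow_nonneg (ha.le.trans hab))).trans ?_
  · intro t ht
    have hpeak : t ≤ r ^ 2 / m :=
      (((lt_max_iff.mp ht.2).resolve_left ht.1.not_gt).trans_le (min_le_right _ _)).le
    have : m * t ≤ r ^ 2 := by rw [le_div_iff₀ hm] at hpeak; linarith
    exact div_nonneg (mul_nonneg (Real.exp_nonneg _) (by linarith))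
      (Real.rpow_nonneg (ha.trans ht.1).le _)
  · intro t ht
    have hpeak : r ^ 2 / m < t :=
      (min_lt_iff.mp (max_lt_iff.mp ht.1).2).resolve_left ht.2.not_gt
    have : r ^ 2 < m * t := by rw [div_lt_iff₀ hm] at hpeak; linarith
    exact div_nonpos_of_nonpos_of_nonneg (mul_nonpos_of_nonneg_of_nonpos (Real.exp_nonneg _)
      (by linarith)) (Real.rpow_nonneg (ha.trans_le (hac.trans ht.1.le)).le _)
  · gcongr
    exact le_min (expNegDivRpow_le hm hr (ha.trans_le hac))
      ((expNegDivRpow_le_inv_rpow (ha.le.trans hac)).trans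
        (inv_anti₀ (by positivity) (Real.rpow_le_rpow ha.le hac hm.le)))

theorem norm_exp_mul_expNegDivRpow_le (hm : 0 < m) (hr : 0 < r) {t : ℝ} (ht : 0 < t) :
    ‖Complex.exp (Complex.I * ((α * t : ℝ) : ℂ)) * (expNegDivRpow m r t : ℂ)‖ ≤
      m ^ m * Real.exp (-m) / r ^ (2 * m) := by
  rw [norm_mul, Complex.norm_exp_I_mul_ofReal, one_mul, Complex.norm_real, Real.norm_eq_abs,
    abs_of_nonneg (expNegDivRpow_nonneg ht.le)]
  exact expNegDivRpow_le hm hr ht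

theorem integrableOn_exp_mul_expNegDivRpow (hm : 0 < m) (hr : 0 < r) (T : ℝ) :
    IntegrableOn (fun t => Complex.exp (Complex.I * ((α * t : ℝ) : ℂ)) * (expNegDivRpow m r t : ℂ))
      (Ioc 0 T) := by
  refine .of_bound measure_Ioc_lt_top (Measurable.aestronglyMeasurable ?_) _
    ((ae_restrict_iff' measurableSet_Ioc).mpr
      (Eventually.of_forall fun t ht => norm_exp_mul_expNegDivRpow_le hm hr ht.1))
  unfold expNegDivRpow
  fun_prop

theorem norm_integral_Ioc_exp_mul_expNegDivRpow_le {ε T : ℝ} (hm : 0 < m) (hr : 0 < r)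
    (hα : α ≠ 0) (hε : 0 < ε) (hεT : ε ≤ T) :
    ‖∫ t in Ioc 0 T, Complex.exp (Complex.I * ((α * t : ℝ) : ℂ)) * (expNegDivRpow m r t : ℂ)‖ ≤
      m ^ m * Real.exp (-m) / r ^ (2 * m) * ε +
        2 * min (m ^ m * Real.exp (-m) / r ^ (2 * m)) (ε ^ m)⁻¹ / |α| := by
  have hint := integrableOn_exp_mul_expNegDivRpow (α := α) hm hr T
  rw [← intervalIntegral.integral_of_le (hε.le.trans hεT),
    ← intervalIntegral.integral_add_adjacent_intervals
      ((intervalIntegrable_iff_integrableOn_Ioc_of_le hε.le).mpr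
        (hint.mono_set (Ioc_subset_Ioc_right hεT)))
      ((intervalIntegrable_iff_integrableOn_Ioc_of_le hεT).mpr
        (hint.mono_set (Ioc_subset_Ioc_left hε.le)))]
  refine (norm_add_le _ _).trans (add_le_add ?_
    (norm_integral_exp_mul_expNegDivRpow_le hm hr hα hε hεT))
  have := intervalIntegral.norm_integral_le_of_norm_le_const fun t ht =>
    norm_exp_mul_expNegDivRpow_le (α := α) hm hr (uIoc_of_le hε.le ▸ ht).1
  rwa [sub_zero, abs_of_pos hε] at this

end Estimate

section SplitPoint

variable {m r β : ℝ}

/-- The `ε` at which `r^{-2m} ε = ε^{-m} / β`. -/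
noncomputable def splitPoint (m r β : ℝ) : ℝ := r ^ (2 * m / (m + 1)) * β ^ (-(1 / (m + 1)))

theorem splitPoint_pos (hr : 0 < r) (hβ : 0 < β) : 0 < splitPoint m r β := by
  unfold splitPoint
  positivity

theorem splitPoint_div_rpow (hm : 0 < m) (hr : 0 < r) (hβ : 0 < β) :
    splitPoint m r β / r ^ (2 * m) = 1 / (β ^ (1 / (m + 1)) * r ^ (2 * m ^ 2 / (m + 1))) := by
  have hexp : 2 * m / (m + 1) - 2 * m = -(2 * m ^ 2 / (m + 1)) := by
    field_simp
    ring
  rw [splitPoint, mul_div_right_comm, ← Real.rpow_sub hr, hexp, Real.rpow_neg hr.le,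
    Real.rpow_neg hβ.le]
  ring

theorem inv_splitPoint_rpow_div (hm : 0 < m) (hr : 0 < r) (hβ : 0 < β) :
    (splitPoint m r β ^ m)⁻¹ / β = 1 / (β ^ (1 / (m + 1)) * r ^ (2 * m ^ 2 / (m + 1))) := by
  have hexp : -(1 / (m + 1)) * m + 1 = 1 / (m + 1) := by
    field_simp
    ring
  rw [splitPoint, Real.mul_rpow (by positivity) (by positivity), ← Real.rpow_mul hr.le,
    ← Real.rpow_mul hβ.le, div_eq_mul_inv, ← mul_inv, mul_assoc, ← Real.rpow_add_one hβ.ne',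
    hexp, show 2 * m / (m + 1) * m = 2 * m ^ 2 / (m + 1) by ring]
  ring

end SplitPoint

section Bounds

variable {m r α T : ℝ}

theorem norm_integral_Ioc_exp_mul_expNegDivRpow_le_div (hm : 0 < m) (hr : 0 < r) (hα : α ≠ 0)
    (hT : 0 < T) :
    ‖∫ t in Ioc 0 T, Complex.exp (Complex.I * ((α * t : ℝ) : ℂ)) * (expNegDivRpow m r t : ℂ)‖ ≤
      2 * (m ^ m * Real.exp (-m) / r ^ (2 * m)) / |α| := by
  set M := m ^ m * Real.exp (-m) / r ^ (2 * m)
  have hlim : Tendsto (fun ε => M * ε + 2 * M / |α|) (𝓝[>] 0) (𝓝 (2 * M / |α|)) := by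
    have := ((tendsto_id (x := 𝓝 (0 : ℝ))).const_mul M).add_const (2 * M / |α|)
    rw [mul_zero, zero_add] at this
    exact tendsto_nhdsWithin_of_tendsto_nhds this
  refine ge_of_tendsto hlim ?_
  filter_upwards [Ioc_mem_nhdsGT hT] with ε hε
  exact (norm_integral_Ioc_exp_mul_expNegDivRpow_le hm hr hα hε.1 hε.2).trans
    (by gcongr; exact min_le_left _ _)

theorem norm_integral_Ioc_exp_mul_expNegDivRpow_le_of_splitPoint_le (hm : 0 < m) (hr : 0 < r)
    (hα : α ≠ 0) (hT : splitPoint m r |α| ≤ T) :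
    ‖∫ t in Ioc 0 T, Complex.exp (Complex.I * ((α * t : ℝ) : ℂ)) * (expNegDivRpow m r t : ℂ)‖ ≤
      (m ^ m * Real.exp (-m) + 2) * (1 / (|α| ^ (1 / (m + 1)) * r ^ (2 * m ^ 2 / (m + 1)))) := by
  have hα' : 0 < |α| := abs_pos.mpr hα
  set L := splitPoint m r |α|
  calc _ ≤ m ^ m * Real.exp (-m) / r ^ (2 * m) * L + 2 * (L ^ m)⁻¹ / |α| :=
        (norm_integral_Ioc_exp_mul_expNegDivRpow_le hm hr hα (splitPoint_pos hr hα') hT).trans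
          (by gcongr; exact min_le_right _ _)
    _ = m ^ m * Real.exp (-m) * (L / r ^ (2 * m)) + 2 * ((L ^ m)⁻¹ / |α|) := by ring
    _ = _ := by rw [splitPoint_div_rpow hm hr hα', inv_splitPoint_rpow_div hm hr hα']; ring

end Bounds

theorem stmt_4 (m : ℝ) (hm : 0 < m) :
    ∃ C > 0, ∀ (α r : ℝ), α ≠ 0 → 0 < r → ∀ I : ℂ,
      Tendsto (fun T : ℝ =>
          ∫ t in Ioc (0 : ℝ) T,
            Complex.exp (Complex.I * ((α * t : ℝ) : ℂ)) *
              ((Real.exp (-(r ^ 2 / t)) / t ^ m : ℝ) : ℂ))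
        atTop (nhds I) →
      ‖I‖ ≤ C * min (1 / (|α| * r ^ (2 * m)))
              (1 / (|α| ^ (1 / (m + 1)) * r ^ (2 * m ^ 2 / (m + 1)))) := by
  have hK : 0 < m ^ m * Real.exp (-m) := by positivity
  refine ⟨2 * (m ^ m * Real.exp (-m)) + 2, by positivity, fun α r hα hr I hI => ?_⟩
  rw [mul_min_of_nonneg _ _ (by positivity)]
  refine le_min (le_of_tendsto hI.norm ?_) (le_of_tendsto hI.norm ?_)
  · filter_upwards [eventually_gt_atTop 0] with T hT
    calc _ ≤ 2 * (m ^ m * Real.exp (-m) / r ^ (2 * m)) / |α| :=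
          norm_integral_Ioc_exp_mul_expNegDivRpow_le_div hm hr hα hT
      _ = 2 * (m ^ m * Real.exp (-m)) * (1 / (|α| * r ^ (2 * m))) := by ring
      _ ≤ _ := by gcongr; linarith
  · filter_upwards [eventually_ge_atTop (splitPoint m r |α|)] with T hT
    exact (norm_integral_Ioc_exp_mul_expNegDivRpow_le_of_splitPoint_le hm hr hα hT).trans
      (mul_le_mul_of_nonneg_right (by linarith) (by positivity))
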